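/- arXiv:2303.12493 — 5 statements merged into one kernel-verified Lean document; each statement's English description precedes it below -/
import Mathlib

section
/- Let a, b, c ∈ ℂ[ξ] be nonzero polynomials such that a is monic and b is not a complex scalar multiple of c (i.e. b/c ∉ ℂ). Write ℓ_a = deg a, ℓ_b = deg b, ℓ_c = deg c, and let b₀ be the leading coefficient of b. If the equation a(ξ)z′ + b(ξ)z = c(ξ) has a polynomial solution z ∈ ℂ[ξ], then either ℓ_c ≥ max(ℓ_a, ℓ_b + 1), or else ℓ_a = ℓ_b + 1 and b₀ is an integer with b₀ ≤ −(ℓ_c − ℓ_b + 1). (Proposition 3.2(i) of the paper.) -/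
open Polynomial

/-- Proposition 3.2(i): if `a z' + b z = c` has a polynomial solution with `a` monic,
`b, c ≠ 0` and `b` not a scalar multiple of `c`, then either
`deg c ≥ max (deg a) (deg b + 1)`, or `deg a = deg b + 1` and the leading coefficient of `b`
is an integer `≤ -(deg c - deg b + 1)`. -/
theorem prop3b_i (a b c z : Polynomial ℂ)
    (ha : a ≠ 0) (hb : b ≠ 0) (hc : c ≠ 0)
    (hmonic : a.Monic)
    (hbc : ∀ k : ℂ, b ≠ Polynomial.C k * c)
    (hsol : a * derivative z + b * z = c) :
    max a.natDegree (b.natDegree + 1) ≤ c.natDegree ∨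
      (a.natDegree = b.natDegree + 1 ∧
        ∃ m : ℤ, b.leadingCoeff = (m : ℂ) ∧
          m ≤ -(((c.natDegree : ℤ) - (b.natDegree : ℤ)) + 1)) := by
  set n := z.natDegree with hn_def
  -- z is nonzero
  have hz : z ≠ 0 := by
    rintro rfl
    simp at hsol
    exact hc hsol.symm
  -- z is not constant
  have hn1 : 1 ≤ n := by
    by_contra h
    have hn0 : n = 0 := by omega
    obtain ⟨k, rfl⟩ := Polynomial.natDegree_eq_zero.mp hn0
    have hk : k ≠ 0 := by
      rintro rfl; simp at hz
    rw [derivative_C, mul_zero, zero_add] at hsol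
    apply hbc k⁻¹
    have hkk : C k⁻¹ * (b * C k) = b := by
      rw [mul_comm b, ← mul_assoc, ← C_mul, inv_mul_cancel₀ hk, C_1, one_mul]
    rw [← hsol]
    exact hkk.symm
  -- derivative facts
  have hcoeffd : (derivative z).coeff (n - 1) = (n : ℂ) * z.coeff n := by
    rw [Polynomial.coeff_derivative]
    have : n - 1 + 1 = n := by omega
    rw [this]
    push_cast [Nat.cast_sub hn1]
    ring
  have hzlead : z.coeff n ≠ 0 := by
    rw [hn_def]
    exact Polynomial.coeff_ne_zero_of_eq_degree (Polynomial.degree_eq_natDegree hz)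
  have hdne : (derivative z).coeff (n - 1) ≠ 0 := by
    rw [hcoeffd]
    refine mul_ne_zero ?_ hzlead
    exact_mod_cast (by omega : n ≠ 0)
  have hdz : derivative z ≠ 0 := fun h => hdne (by rw [h]; simp)
  have hdeg_dz : (derivative z).natDegree = n - 1 := by
    refine le_antisymm (Polynomial.natDegree_derivative_le z) ?_
    exact Polynomial.le_natDegree_of_ne_zero hdne
  have hdeg_az : (a * derivative z).natDegree = a.natDegree + (n - 1) := by
    rw [Polynomial.natDegree_mul ha hdz, hdeg_dz]
  have hdeg_bz : (b * z).natDegree = b.natDegree + n := by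
    rw [Polynomial.natDegree_mul hb hz]
  by_cases hcase : a.natDegree = b.natDegree + 1
  · -- degrees of the two summands agree
    have hEa : a.natDegree + (n - 1) = b.natDegree + n := by omega
    -- coefficient of c at degree b.natDegree + n
    have hca : (a * derivative z).coeff (b.natDegree + n) =
        (n : ℂ) * z.coeff n := by
      rw [← hEa, ← hdeg_dz]
      rw [Polynomial.coeff_mul_degree_add_degree, hmonic.leadingCoeff, one_mul,
        Polynomial.leadingCoeff, hdeg_dz, hcoeffd]
    have hcb : (b * z).coeff (b.natDegree + n) = b.leadingCoeff * z.coeff n := by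
      rw [hn_def]
      exact Polynomial.coeff_mul_degree_add_degree b z
    have hcc : c.coeff (b.natDegree + n) = ((n : ℂ) + b.leadingCoeff) * z.coeff n := by
      rw [← hsol, Polynomial.coeff_add, hca, hcb]; ring
    by_cases hs : (n : ℂ) + b.leadingCoeff = 0
    · -- leading terms cancel: right disjunct
      right
      refine ⟨hcase, -(n : ℤ), ?_, ?_⟩
      · have : b.leadingCoeff = -(n : ℂ) := by linear_combination hs
        rw [this]; push_cast; ring
      · -- need c.natDegree < b.natDegree + n
        have hcc0 : c.coeff (b.natDegree + n) = 0 := by rw [hcc, hs, zero_mul]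
        have hle : c.natDegree ≤ b.natDegree + n := by
          rw [← hsol]
          refine le_trans (Polynomial.natDegree_add_le _ _) ?_
          rw [hdeg_az, hdeg_bz]
          omega
        have hne : c.natDegree ≠ b.natDegree + n := by
          intro h
          apply Polynomial.leadingCoeff_ne_zero.mpr hc
          rw [Polynomial.leadingCoeff, h, hcc0]
        have : c.natDegree < b.natDegree + n := lt_of_le_of_ne hle hne
        omega
    · -- no cancellation: left disjunct
      left
      have : c.coeff (b.natDegree + n) ≠ 0 := by
        rw [hcc]; exact mul_ne_zero hs hzlead
      have := Polynomial.le_natDegree_of_ne_zero this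
      omega
  · -- degrees of summands differ: degree of sum is the max
    left
    have hne : (a * derivative z).natDegree ≠ (b * z).natDegree := by
      rw [hdeg_az, hdeg_bz]; omega
    have hdegc : c.natDegree = max (a.natDegree + (n - 1)) (b.natDegree + n) := by
      rw [← hsol]
      rcases lt_or_gt_of_ne hne with h | h
      · have h' := h; rw [hdeg_az, hdeg_bz] at h'
        rw [Polynomial.natDegree_add_eq_right_of_natDegree_lt h, hdeg_bz,
          max_eq_right h'.le]
      · have h' := h; rw [hdeg_az, hdeg_bz] at h'
        rw [Polynomial.natDegree_add_eq_left_of_natDegree_lt h, hdeg_az,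
          max_eq_left h'.le]
    rw [hdegc]
    omega
end

section
/- Let a, b ∈ ℂ[ξ] be nonzero polynomials with no common nonconstant factor, let c ∈ ℂ[ξ], and let r, s ∈ ℂ[ξ] be polynomials such that c = a·r + b·s and either s = 0 or deg s < deg a. If z ∈ ℂ[ξ] is a polynomial solution of a(ξ)z′ + b(ξ)z = c(ξ), then a divides z − s in ℂ[ξ], and the polynomial ζ = (z − s)/a is a polynomial solution of the equation a(ξ)ζ′ + (a′(ξ) + b(ξ))ζ = r(ξ) − s′(ξ). (Proposition A.1 of the paper, underlying Rothstein's algorithm.) -/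
open Polynomial

/-- Proposition A.1: let `a, b` be nonzero coprime polynomials, `c = a r + b s` with
`s = 0` or `deg s < deg a`.  If `z` solves `a z' + b z = c`, then `a ∣ z - s` and
`ζ = (z - s)/a` solves `a ζ' + (a' + b) ζ = r - s'`. -/
theorem propA1 (a b c r s z : Polynomial ℂ)
    (ha : a ≠ 0) (hb : b ≠ 0)
    (hcop : ∀ d : Polynomial ℂ, d ∣ a → d ∣ b → IsUnit d)
    (hrs : c = a * r + b * s)
    (hs : s = 0 ∨ s.degree < a.degree)
    (hsol : a * derivative z + b * z = c) :
    a ∣ z - s ∧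
      a * derivative ((z - s) / a) + (derivative a + b) * ((z - s) / a)
        = r - derivative s := by
  classical
  have hco : IsCoprime a b := by
    rw [← EuclideanDomain.gcd_isUnit_iff]
    exact hcop _ (EuclideanDomain.gcd_dvd_left a b) (EuclideanDomain.gcd_dvd_right a b)
  have hmul : a ∣ b * (z - s) := by
    refine ⟨r - derivative z, ?_⟩
    have := hsol.trans hrs
    ring_nf
    ring_nf at this
    linear_combination this
  have hdvd : a ∣ z - s := hco.dvd_of_dvd_mul_left hmul
  refine ⟨hdvd, ?_⟩
  set ζ := (z - s) / a with hζ
  have hz : a * ζ = z - s := EuclideanDomain.mul_div_cancel' ha hdvd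
  have hder : derivative a * ζ + a * derivative ζ = derivative z - derivative s := by
    have := congrArg derivative hz
    simpa [derivative_mul] using this
  apply mul_left_cancel₀ ha
  calc a * (a * derivative ζ + (derivative a + b) * ζ)
      = a * (derivative z - derivative s) + b * (a * ζ) := by ring_nf; linear_combination a * hder
    _ = a * (derivative z - derivative s) + b * (z - s) := by rw [hz]
    _ = c - a * derivative s - b * s := by linear_combination hsol
    _ = a * (r - derivative s) := by rw [hrs]; ring
end

section
/- Let α₁, α₃, β₂, β₆ be real numbers with α₃β₆ ≠ 0, and suppose that α₁/α₃ ∉ ℚ or β₂/β₆ − α₁/α₃ ∉ ℚ. Let I be a nonempty open interval contained in {x ∈ ℝ : x > 0 and β₆x + α₃ > 0}. Then the function Ω(x) = x^{α₁/α₃}·(β₆x + α₃)^{β₂/β₆ − α₁/α₃} is transcendental over the rational functions on I: there is no nonzero polynomial P ∈ ℝ[X,Y] in two variables such that P(x, Ω(x)) = 0 for all x ∈ I. (Verification of condition (H1) in Section 4.1 of the paper.) -/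
/-!
If `P(x, Ω(x)) = 0` on the interval, analytic continuation extends the relation to the whole
interval `{x > 0, β₆ x + α₃ > 0}`. Near each endpoint of this interval, `Ω` is a power `y ^ θ`
of a local coordinate `y → 0⁺` times a function with a nonzero limit: `θ = α₁/α₃` at `x = 0`,
`θ = β₂/β₆ - α₁/α₃` at the root of `β₆ x + α₃`, and `θ = -β₂/β₆` at `x = ∞` (with `y = 1/x`).
When `θ` is irrational, the terms `c_j(x) Ω(x) ^ j` of the relation have pairwise distinct orders
`m_j + j θ` in `y`, so the one of least order dominates and every `c_j` must vanish. In each sign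
configuration of `α₃, β₆` one of the available endpoints has an irrational exponent.
-/

open Real Filter Topology Polynomial

theorem AnalyticAt.rpow_const {f : ℝ → ℝ} {x : ℝ} (hf : AnalyticAt ℝ f x) (hfx : 0 < f x)
    (p : ℝ) : AnalyticAt ℝ (fun y => f y ^ p) x := by
  refine (analyticAt_rexp.comp (f := fun y => Real.log (f y) * p)
    ((hf.log hfx).mul analyticAt_const)).congr ?_
  filter_upwards [hf.continuousAt.eventually (lt_mem_nhds hfx)] with y hy
  exact (rpow_def_of_pos hy p).symm

theorem not_eventually_sum_eq_zero_of_distinct_exponents {ι : Type*} {s : Finset ι}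
    (hs : s.Nonempty) {f : ι → ℝ → ℝ} {e C : ι → ℝ} (he : Set.InjOn e s)
    (hC : ∀ i ∈ s, C i ≠ 0)
    (hf : ∀ i ∈ s, Tendsto (fun y => f i y * y ^ (-e i)) (𝓝[>] 0) (𝓝 (C i))) :
    ¬ ∀ᶠ y in 𝓝[>] 0, ∑ i ∈ s, f i y = 0 := by
  classical
  intro hsum
  obtain ⟨i₀, hi₀, hmin⟩ := s.exists_min_image e hs
  have hterm : ∀ i ∈ s, Tendsto (fun y => f i y * y ^ (-e i₀)) (𝓝[>] 0)
      (𝓝 (if i = i₀ then C i₀ else 0)) := by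
    intro i hi
    split_ifs with hii₀
    · exact hii₀ ▸ hf i hi
    have hpos : 0 < e i - e i₀ :=
      sub_pos.2 ((hmin i hi).lt_of_ne fun h => hii₀ (he hi hi₀ h.symm))
    have hpow : Tendsto (fun y : ℝ => y ^ (e i - e i₀)) (𝓝[>] 0) (𝓝 0) := by
      simpa [zero_rpow hpos.ne'] using
        ((continuousAt_rpow_const 0 _ (Or.inr hpos.le)).tendsto.mono_left nhdsWithin_le_nhds)
    have hlim := (hf i hi).mul hpow
    rw [mul_zero] at hlim
    refine hlim.congr' ?_
    filter_upwards [self_mem_nhdsWithin] with y (hy : 0 < y)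
    rw [mul_assoc, ← rpow_add hy]
    ring_nf
  have hlim := tendsto_finsetSum s hterm
  rw [Finset.sum_ite_eq' s i₀, if_pos hi₀] at hlim
  refine hC i₀ hi₀ (tendsto_nhds_unique hlim (tendsto_const_nhds.congr' ?_))
  filter_upwards [hsum] with y hy
  rw [← Finset.sum_mul, hy, zero_mul]

theorem not_eventually_sum_mul_rpow_mul_pow_eq_zero {θ : ℝ} (hθ : Irrational θ) {g : ℝ → ℝ}
    {K : ℝ} (hK : K ≠ 0) (hg : Tendsto g (𝓝[>] 0) (𝓝 K)) {s : Finset ℕ} (hs : s.Nonempty)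
    {f : ℕ → ℝ → ℝ}
    (hf : ∀ j ∈ s, ∃ m : ℤ, ∃ C ≠ 0, Tendsto (fun y => f j y * y ^ (-(m : ℝ))) (𝓝[>] 0) (𝓝 C)) :
    ¬ ∀ᶠ y in 𝓝[>] 0, ∑ j ∈ s, f j y * (y ^ θ * g y) ^ j = 0 := by
  choose! m C hC hfC using hf
  refine not_eventually_sum_eq_zero_of_distinct_exponents hs (e := fun j => m j + j * θ)
    (C := fun j => C j * K ^ j) ?_ (fun j hj => mul_ne_zero (hC j hj) (pow_ne_zero j hK)) ?_
  · intro j hj k hk hjk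
    by_contra hne
    have hjk' : (j : ℝ) - k ≠ 0 := sub_ne_zero.2 (by exact_mod_cast hne)
    refine hθ ⟨(m k - m j : ℚ) / (j - k), ?_⟩
    push_cast
    simp only at hjk
    field_simp
    linarith
  · intro j hj
    refine ((hfC j hj).mul (hg.pow j)).congr' ?_
    filter_upwards [self_mem_nhdsWithin] with y (hy : 0 < y)
    rw [mul_pow, ← rpow_mul_natCast hy.le, neg_add, rpow_add hy, mul_comm (j : ℝ) θ,
      rpow_neg hy.le (θ * j)]
    field_simp

theorem Polynomial.tendsto_eval_add_mul_mul_rpow_neg (p : ℝ[X]) (x₀ l : ℝ) :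
    Tendsto (fun y => p.eval (x₀ + l * y) * y ^ (-(p.rootMultiplicity x₀ : ℝ))) (𝓝[>] 0)
      (𝓝 (l ^ p.rootMultiplicity x₀ * (p /ₘ (X - C x₀) ^ p.rootMultiplicity x₀).eval x₀)) := by
  set m := p.rootMultiplicity x₀
  set r := p /ₘ (X - C x₀) ^ m
  have hr : Tendsto (fun y => l ^ m * r.eval (x₀ + l * y)) (𝓝[>] 0) (𝓝 (l ^ m * r.eval x₀)) :=
    ((Continuous.tendsto' (by fun_prop) 0 _ (by simp)).mono_left nhdsWithin_le_nhds)
  refine hr.congr' ?_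
  filter_upwards [self_mem_nhdsWithin] with y (hy : 0 < y)
  conv_rhs => rw [← pow_mul_divByMonic_rootMultiplicity_eq p x₀]
  simp only [eval_mul, eval_pow, eval_sub, eval_X, eval_C, rpow_neg hy.le, rpow_natCast]
  field_simp
  ring

theorem Polynomial.tendsto_eval_inv_mul_pow_natDegree (p : ℝ[X]) :
    Tendsto (fun y => p.eval y⁻¹ * y ^ p.natDegree) (𝓝[>] 0) (𝓝 p.leadingCoeff) := by
  have hrev : Tendsto (fun y => p.reverse.eval y) (𝓝[>] 0) (𝓝 p.leadingCoeff) := by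
    rw [← coeff_zero_reverse, coeff_zero_eq_eval_zero]
    exact (p.reverse.continuous.tendsto 0).mono_left nhdsWithin_le_nhds
  refine hrev.congr' ?_
  filter_upwards [self_mem_nhdsWithin] with y (hy : 0 < y)
  have : Invertible y⁻¹ := invertibleOfNonzero (inv_ne_zero hy.ne')
  have h := eval₂_reverse_mul_pow (RingHom.id ℝ) y⁻¹ p
  rw [invOf_eq_inv, inv_inv, eval₂_id, eval₂_id] at h
  rw [← h, mul_assoc, ← mul_pow, inv_mul_cancel₀ hy.ne', one_pow, mul_one]

theorem Polynomial.evalEval_eq_sum {R : Type*} [CommSemiring R] (x y : R) (Q : R[X][X]) :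
    Q.evalEval x y = ∑ j ∈ Q.support, (Q.coeff j).eval x * y ^ j := by
  rw [evalEval, eval_eq_sum (p := Q), Polynomial.sum, eval_finsetSum]
  simp

theorem Polynomial.eq_zero_of_eventually_evalEval_add_mul_eq_zero {Q : ℝ[X][X]} {x₀ l θ K : ℝ}
    {g : ℝ → ℝ} (hl : l ≠ 0) (hθ : Irrational θ) (hK : K ≠ 0) (hg : Tendsto g (𝓝[>] 0) (𝓝 K))
    (hQ : ∀ᶠ y in 𝓝[>] 0, Q.evalEval (x₀ + l * y) (y ^ θ * g y) = 0) : Q = 0 := by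
  by_contra hQ0
  refine not_eventually_sum_mul_rpow_mul_pow_eq_zero hθ hK hg (support_nonempty.2 hQ0)
    (f := fun j y => (Q.coeff j).eval (x₀ + l * y)) (fun j hj => ?_)
    (by simpa [evalEval_eq_sum] using hQ)
  exact ⟨(Q.coeff j).rootMultiplicity x₀, _, mul_ne_zero (pow_ne_zero _ hl)
    (eval_divByMonic_pow_rootMultiplicity_ne_zero x₀ (mem_support_iff.1 hj)),
    by simpa using (Q.coeff j).tendsto_eval_add_mul_mul_rpow_neg x₀ l⟩

theorem Polynomial.eq_zero_of_eventually_evalEval_inv_eq_zero {Q : ℝ[X][X]} {θ K : ℝ}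
    {g : ℝ → ℝ} (hθ : Irrational θ) (hK : K ≠ 0) (hg : Tendsto g (𝓝[>] 0) (𝓝 K))
    (hQ : ∀ᶠ y in 𝓝[>] 0, Q.evalEval y⁻¹ (y ^ θ * g y) = 0) : Q = 0 := by
  by_contra hQ0
  refine not_eventually_sum_mul_rpow_mul_pow_eq_zero hθ hK hg (support_nonempty.2 hQ0)
    (f := fun j y => (Q.coeff j).eval y⁻¹) (fun j hj => ?_)
    (by simpa [evalEval_eq_sum] using hQ)
  refine ⟨-(Q.coeff j).natDegree, _, leadingCoeff_ne_zero.2 (mem_support_iff.1 hj), ?_⟩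
  refine ((Q.coeff j).tendsto_eval_inv_mul_pow_natDegree).congr' ?_
  filter_upwards with y
  simp [rpow_natCast]

theorem Irrational.add_of_not_irrational {x y : ℝ} (hx : Irrational x) (hy : ¬ Irrational y) :
    Irrational (x + y) := by
  obtain ⟨q, rfl⟩ := not_not.1 hy
  exact hx.add_ratCast q

theorem MvPolynomial.exists_evalEval_eq_eval {R : Type*} [CommRing R] [IsDomain R] [Infinite R]
    {P : MvPolynomial (Fin 2) R} (hP : P ≠ 0) :
    ∃ Q : R[X][X], Q ≠ 0 ∧ ∀ x y, Q.evalEval x y = eval ![x, y] P := by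
  have hQ : ∀ (P : MvPolynomial (Fin 2) R) x y,
      (aeval ![(Polynomial.C Polynomial.X : R[X][X]), Polynomial.X] P).evalEval x y =
        eval ![x, y] P := by
    intro P x y
    induction P using MvPolynomial.induction_on with
    | C r => simp
    | add p q hp hq => simp [hp, hq]
    | mul_X p i hp => fin_cases i <;> simp [hp, evalEval_C]
  refine ⟨_, fun h0 => hP (MvPolynomial.funext fun v => ?_), hQ P⟩
  have hv : v = ![v 0, v 1] := by ext i; fin_cases i <;> rfl
  rw [hv, ← hQ, h0]
  simp

section
variable {a b α₃ β₆ : ℝ}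

theorem convex_setOf_pos_and_mul_add_pos : Convex ℝ {x : ℝ | 0 < x ∧ 0 < β₆ * x + α₃} := by
  intro x hx y hy s t hs ht hst
  have h₁ := convex_Ioi (0 : ℝ) hx.1 hy.1 hs ht hst
  have h₂ := convex_Ioi (0 : ℝ) hx.2 hy.2 hs ht hst
  simp only [smul_eq_mul, Set.mem_Ioi] at h₁ h₂
  refine ⟨h₁, ?_⟩
  linear_combination h₂ + α₃ * hst

theorem eval_eq_zero_of_forall_mem_Ioo {P : MvPolynomial (Fin 2) ℝ} {s t : ℝ} (hst : s < t)
    (hI : Set.Ioo s t ⊆ {x : ℝ | 0 < x ∧ 0 < β₆ * x + α₃})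
    (hP : ∀ x ∈ Set.Ioo s t, MvPolynomial.eval ![x, x ^ a * (β₆ * x + α₃) ^ b] P = 0)
    {x : ℝ} (hx : 0 < x) (hux : 0 < β₆ * x + α₃) :
    MvPolynomial.eval ![x, x ^ a * (β₆ * x + α₃) ^ b] P = 0 := by
  have hF : AnalyticOnNhd ℝ (fun x => MvPolynomial.eval ![x, x ^ a * (β₆ * x + α₃) ^ b] P)
      {x : ℝ | 0 < x ∧ 0 < β₆ * x + α₃} := by
    refine AnalyticOnNhd.aeval_mvPolynomial (fun i => ?_) P
    fin_cases i
    · exact analyticOnNhd_id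
    · intro x hx
      exact (analyticAt_id.rpow_const hx.1 a).mul
        ((analyticAt_const.mul analyticAt_id).add analyticAt_const |>.rpow_const hx.2 b)
  have hmid : (s + t) / 2 ∈ Set.Ioo s t := ⟨by linarith, by linarith⟩
  exact hF.eqOn_zero_of_preconnected_of_eventuallyEq_zero
    convex_setOf_pos_and_mul_add_pos.isPreconnected (hI hmid)
    (Filter.eventually_of_mem (isOpen_Ioo.mem_nhds hmid) hP) ⟨hx, hux⟩

variable {Q : ℝ[X][X]}

theorem eq_zero_of_irrational_exponent_at_zero (ha : Irrational a) (hα₃ : 0 < α₃)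
    (hQ : ∀ x, 0 < x → 0 < β₆ * x + α₃ → Q.evalEval x (x ^ a * (β₆ * x + α₃) ^ b) = 0) :
    Q = 0 := by
  have hu : Tendsto (fun y => β₆ * y + α₃) (𝓝[>] 0) (𝓝 α₃) :=
    (Continuous.tendsto' (by fun_prop) 0 _ (by simp)).mono_left nhdsWithin_le_nhds
  refine eq_zero_of_eventually_evalEval_add_mul_eq_zero (x₀ := 0) one_ne_zero ha
    (rpow_pos_of_pos hα₃ b).ne' (hu.rpow_const (Or.inl hα₃.ne')) ?_
  filter_upwards [self_mem_nhdsWithin, hu.eventually (lt_mem_nhds hα₃)] with y hy hyu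
  simpa using hQ y hy hyu

theorem eq_zero_of_irrational_exponent_at_affine_root (hb : Irrational b) (hx₀ : 0 < -α₃ / β₆)
    (hQ : ∀ x, 0 < x → 0 < β₆ * x + α₃ → Q.evalEval x (x ^ a * (β₆ * x + α₃) ^ b) = 0) :
    Q = 0 := by
  have hβ₆ : β₆ ≠ 0 := by rintro rfl; simp at hx₀
  have hx : Tendsto (fun y => -α₃ / β₆ + β₆⁻¹ * y) (𝓝[>] 0) (𝓝 (-α₃ / β₆)) :=
    (Continuous.tendsto' (by fun_prop) 0 _ (by simp)).mono_left nhdsWithin_le_nhds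
  refine eq_zero_of_eventually_evalEval_add_mul_eq_zero (x₀ := -α₃ / β₆) (inv_ne_zero hβ₆) hb
    (rpow_pos_of_pos hx₀ a).ne' (hx.rpow_const (Or.inl hx₀.ne')) ?_
  filter_upwards [self_mem_nhdsWithin, hx.eventually (lt_mem_nhds hx₀)] with y (hy : 0 < y) hxy
  have hlin : β₆ * (-α₃ / β₆ + β₆⁻¹ * y) + α₃ = y := by field_simp; ring
  have h := hQ _ hxy (by rwa [hlin])
  rwa [hlin, mul_comm (_ ^ a)] at h

theorem eq_zero_of_irrational_exponent_atTop (hab : Irrational (a + b)) (hβ₆ : 0 < β₆)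
    (hQ : ∀ x, 0 < x → 0 < β₆ * x + α₃ → Q.evalEval x (x ^ a * (β₆ * x + α₃) ^ b) = 0) :
    Q = 0 := by
  have hu : Tendsto (fun y => β₆ + α₃ * y) (𝓝[>] 0) (𝓝 β₆) :=
    (Continuous.tendsto' (by fun_prop) 0 _ (by simp)).mono_left nhdsWithin_le_nhds
  refine eq_zero_of_eventually_evalEval_inv_eq_zero hab.neg (rpow_pos_of_pos hβ₆ b).ne'
    (hu.rpow_const (Or.inl hβ₆.ne')) ?_
  filter_upwards [self_mem_nhdsWithin, hu.eventually (lt_mem_nhds hβ₆)] with y (hy : 0 < y) hyu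
  have hlin : β₆ * y⁻¹ + α₃ = (β₆ + α₃ * y) * y⁻¹ := by field_simp
  have hΩ : y⁻¹ ^ a * (β₆ * y⁻¹ + α₃) ^ b = y ^ (-(a + b)) * (β₆ + α₃ * y) ^ b := by
    rw [hlin, mul_rpow hyu.le (inv_nonneg.2 hy.le), inv_rpow hy.le, inv_rpow hy.le, neg_add,
      rpow_add hy, rpow_neg hy.le, rpow_neg hy.le]
    ring
  rw [← hΩ]
  exact hQ _ (inv_pos.2 hy) (hlin ▸ mul_pos hyu (inv_pos.2 hy))

end

/-- Condition (H1) in Section 4.1: `Ω(x) = x^(α₁/α₃) (β₆ x + α₃)^(β₂/β₆ - α₁/α₃)` is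
transcendental over the rational functions on any nonempty open interval contained in
`{x | x > 0 ∧ β₆ x + α₃ > 0}`, provided `α₃ β₆ ≠ 0` and `α₁/α₃ ∉ ℚ` or
`β₂/β₆ - α₁/α₃ ∉ ℚ`. -/
theorem H1_sec41 (α₁ α₃ β₂ β₆ : ℝ) (h : α₃ * β₆ ≠ 0)
    (hirr : Irrational (α₁ / α₃) ∨ Irrational (β₂ / β₆ - α₁ / α₃))
    (s t : ℝ) (hst : s < t)
    (hI : Set.Ioo s t ⊆ {x : ℝ | 0 < x ∧ 0 < β₆ * x + α₃}) :
    ¬ ∃ P : MvPolynomial (Fin 2) ℝ, P ≠ 0 ∧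
      ∀ x ∈ Set.Ioo s t,
        MvPolynomial.eval
          ![x, x ^ (α₁ / α₃) * (β₆ * x + α₃) ^ (β₂ / β₆ - α₁ / α₃)] P = 0 := by
  rintro ⟨P, hP, hPI⟩
  set a := α₁ / α₃
  set b := β₂ / β₆ - α₁ / α₃
  obtain ⟨Q, hQ0, hQP⟩ := MvPolynomial.exists_evalEval_eq_eval hP
  have hQ : ∀ x, 0 < x → 0 < β₆ * x + α₃ → Q.evalEval x (x ^ a * (β₆ * x + α₃) ^ b) = 0 :=
    fun x hx hux => (hQP _ _).trans (eval_eq_zero_of_forall_mem_Ioo hst hI hPI hx hux)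
  apply hQ0
  rcases (left_ne_zero_of_mul h).lt_or_gt with hα | hα <;>
    rcases (right_ne_zero_of_mul h).lt_or_gt with hβ | hβ
  · obtain ⟨hx, hux⟩ := hI (Set.nonempty_Ioo.2 hst).some_mem
    nlinarith
  · by_cases hb : Irrational b
    · exact eq_zero_of_irrational_exponent_at_affine_root hb (div_pos (neg_pos.2 hα) hβ) hQ
    · exact eq_zero_of_irrational_exponent_atTop
        ((hirr.resolve_right hb).add_of_not_irrational hb) hβ hQ
  · by_cases ha : Irrational a
    · exact eq_zero_of_irrational_exponent_at_zero ha hα hQ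
    · exact eq_zero_of_irrational_exponent_at_affine_root (hirr.resolve_left ha)
        (div_pos_of_neg_of_neg (neg_neg_of_pos hα) hβ) hQ
  · by_cases ha : Irrational a
    · exact eq_zero_of_irrational_exponent_at_zero ha hα hQ
    · exact eq_zero_of_irrational_exponent_atTop
        (add_comm b a ▸ (hirr.resolve_left ha).add_of_not_irrational ha) hβ hQ
end

section
/- Let α₁, β₂, β₆ be real numbers with β₆ ≠ 0, and suppose that α₁ ≠ 0 or β₂/β₆ ∉ ℚ. Then for every δ > 0 the function Ω(x) = exp(−α₁/(β₆x))·x^{β₂/β₆} is transcendental over the rational functions on (0, δ): there is no nonzero polynomial P ∈ ℝ[X,Y] in two variables such that P(x, Ω(x)) = 0 for all x ∈ (0, δ). (Verification of condition (H1) in Section 4.2 of the paper.) -/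
open Real Filter Topology

/-- A term `x ^ b * exp (e / x)` tends to `0` as `x → 0⁺`, provided `e < 0`,
or `e = 0` and `b > 0`. -/
lemma term_tendsto_zero (b e : ℝ) (he : e < 0 ∨ (e = 0 ∧ 0 < b)) :
    Tendsto (fun x : ℝ => x ^ b * Real.exp (e / x)) (𝓝[>] (0:ℝ)) (𝓝 0) := by
  have hev : ∀ᶠ x : ℝ in 𝓝[>] (0:ℝ), 0 < x :=
    eventually_nhdsWithin_of_forall (fun x hx => hx)
  rcases he with he | ⟨he, hb⟩
  · have key : Tendsto (fun t : ℝ => t ^ (-b) * Real.exp (-(-e) * t)) atTop (𝓝 0) :=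
      tendsto_rpow_mul_exp_neg_mul_atTop_nhds_zero (-b) (-e) (by linarith)
    have comp := key.comp tendsto_inv_nhdsGT_zero
    refine comp.congr' ?_
    filter_upwards [hev] with x hx
    simp only [Function.comp]
    rw [Real.inv_rpow hx.le, Real.rpow_neg hx.le, inv_inv, neg_neg, div_eq_mul_inv]
  · subst he
    have key : Tendsto (fun t : ℝ => t ^ (-b)) atTop (𝓝 0) := tendsto_rpow_neg_atTop hb
    have comp := key.comp tendsto_inv_nhdsGT_zero
    refine comp.congr' ?_
    filter_upwards [hev] with x hx
    simp only [Function.comp, zero_div, Real.exp_zero, mul_one]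
    rw [Real.inv_rpow hx.le, Real.rpow_neg hx.le, inv_inv]

/-- Linear independence of the functions `x ^ γ i * exp (c i / x)` on `(0, δ)`. -/
lemma lin_indep {ι : Type*} [DecidableEq ι] (δ : ℝ) (hδ : 0 < δ) :
    ∀ (n : ℕ) (s : Finset ι), s.card = n → ∀ (γ c A : ι → ℝ),
    (∀ i ∈ s, ∀ j ∈ s, c i = c j → γ i = γ j → i = j) →
    (∀ x ∈ Set.Ioo (0:ℝ) δ, ∑ i ∈ s, A i * x ^ (γ i) * Real.exp (c i / x) = 0) →
    ∀ i ∈ s, A i = 0 := by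
  intro n
  induction n with
  | zero =>
    intro s hs γ c A _ _ i hi
    simp [Finset.card_eq_zero.mp hs] at hi
  | succ n ih =>
    intro s hs γ c A hinj hsum
    have hne : s.Nonempty := Finset.card_pos.mp (by omega)
    classical
    obtain ⟨i₀, hi₀s, hmax⟩ := s.exists_max_image c hne
    have hTne : (s.filter (fun i => c i = c i₀)).Nonempty :=
      ⟨i₀, Finset.mem_filter.2 ⟨hi₀s, rfl⟩⟩
    obtain ⟨i₁, hi₁T, hmin⟩ := (s.filter (fun i => c i = c i₀)).exists_min_image γ hTne
    obtain ⟨hi₁s, hi₁c⟩ := Finset.mem_filter.mp hi₁T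
    have hdom : ∀ j ∈ s, j ≠ i₁ → c j < c i₁ ∨ (c j = c i₁ ∧ γ i₁ < γ j) := by
      intro j hjs hjne
      rcases lt_or_eq_of_le ((hmax j hjs).trans_eq hi₁c.symm) with h1 | h1
      · exact Or.inl h1
      · refine Or.inr ⟨h1, ?_⟩
        have hjT : j ∈ s.filter (fun i => c i = c i₀) :=
          Finset.mem_filter.2 ⟨hjs, h1.trans hi₁c⟩
        rcases lt_or_eq_of_le (hmin j hjT) with h2 | h2
        · exact h2
        · exact absurd (hinj j hjs i₁ hi₁s h1 h2.symm) hjne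
    -- the renormalized sum
    set g : ℝ → ℝ :=
      fun x => ∑ i ∈ s, A i * x ^ (γ i - γ i₁) * Real.exp ((c i - c i₁) / x) with hg
    have hg0 : ∀ x ∈ Set.Ioo (0:ℝ) δ, g x = 0 := by
      intro x hx
      have hx0 : (0:ℝ) < x := hx.1
      have : g x = (∑ i ∈ s, A i * x ^ (γ i) * Real.exp (c i / x)) *
          (x ^ (-γ i₁) * Real.exp (-c i₁ / x)) := by
        rw [Finset.sum_mul]
        refine Finset.sum_congr rfl fun i _ => ?_
        rw [show γ i - γ i₁ = γ i + (-γ i₁) by ring, Real.rpow_add hx0,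
          show (c i - c i₁) / x = c i / x + (-c i₁) / x by ring, Real.exp_add]
        ring
      rw [this, hsum x hx, zero_mul]
    have hlim : Tendsto g (𝓝[>] (0:ℝ)) (𝓝 (A i₁)) := by
      have : Tendsto g (𝓝[>] (0:ℝ))
          (𝓝 (∑ i ∈ s, if i = i₁ then A i₁ else 0)) := by
        refine tendsto_finset_sum s fun i his => ?_
        by_cases hii : i = i₁
        · subst hii
          simp only [if_pos rfl, sub_self, zero_div, Real.exp_zero, mul_one]
          have : ∀ᶠ x : ℝ in 𝓝[>] (0:ℝ), A i * x ^ (0:ℝ) = A i := by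
            refine eventually_nhdsWithin_of_forall fun x hx => ?_
            rw [Real.rpow_zero, mul_one]
          exact tendsto_const_nhds.congr' (this.mono fun x hx => hx.symm)
        · simp only [if_neg hii]
          have hd := hdom i his hii
          have := term_tendsto_zero (γ i - γ i₁) (c i - c i₁)
            (by rcases hd with h1 | ⟨h1, h2⟩
                · exact Or.inl (by linarith)
                · exact Or.inr ⟨by linarith, by linarith⟩)
          have := this.const_mul (A i)
          simpa [mul_assoc] using this
      simpa [Finset.sum_ite_eq' s i₁ (fun _ => A i₁), hi₁s] using this
    have hA1 : A i₁ = 0 := by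
      have hlim0 : Tendsto g (𝓝[>] (0:ℝ)) (𝓝 0) := by
        refine Tendsto.congr' ?_ (tendsto_const_nhds : Tendsto (fun _ : ℝ => (0:ℝ)) _ _)
        filter_upwards [Ioo_mem_nhdsGT_of_mem (by constructor <;> simp [hδ] : (0:ℝ) ∈ Set.Ico (0:ℝ) δ)] with x hx
        exact (hg0 x hx).symm
      exact tendsto_nhds_unique hlim hlim0
    -- recurse on s.erase i₁
    have hrec := ih (s.erase i₁) (by rw [Finset.card_erase_of_mem hi₁s, hs]; rfl) γ c A
      (fun i hi j hj => hinj i (Finset.mem_of_mem_erase hi) j (Finset.mem_of_mem_erase hj))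
      (by
        intro x hx
        have := hsum x hx
        rw [← Finset.add_sum_erase s _ hi₁s, hA1, zero_mul, zero_mul, zero_add] at this
        exact this)
    intro i his
    by_cases hii : i = i₁
    · rw [hii]; exact hA1
    · exact hrec i (Finset.mem_erase.2 ⟨hii, his⟩)

/-- Condition (H1) in Section 4.2: `Ω(x) = exp(-α₁/(β₆ x)) x^(β₂/β₆)` is transcendental
over the rational functions on `(0, δ)` for every `δ > 0`, provided `β₆ ≠ 0` and
`α₁ ≠ 0` or `β₂/β₆ ∉ ℚ`. -/
theorem H1_sec42 (α₁ β₂ β₆ : ℝ) (h : β₆ ≠ 0)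
    (hcond : α₁ ≠ 0 ∨ Irrational (β₂ / β₆))
    (δ : ℝ) (hδ : 0 < δ) :
    ¬ ∃ P : MvPolynomial (Fin 2) ℝ, P ≠ 0 ∧
      ∀ x ∈ Set.Ioo (0 : ℝ) δ,
        MvPolynomial.eval
          ![x, Real.exp (-α₁ / (β₆ * x)) * x ^ (β₂ / β₆)] P = 0 := by
  rintro ⟨P, hP, heval⟩
  classical
  set p : ℝ := β₂ / β₆ with hp
  set a : ℝ := α₁ / β₆ with ha
  set γ : (Fin 2 →₀ ℕ) → ℝ := fun d => (d 0 : ℝ) + p * (d 1 : ℝ) with hγ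
  set c : (Fin 2 →₀ ℕ) → ℝ := fun d => -a * (d 1 : ℝ) with hc
  set A : (Fin 2 →₀ ℕ) → ℝ := fun d => MvPolynomial.coeff d P with hA
  -- injectivity of d ↦ (c d, γ d) on the support
  have hinj : ∀ d ∈ P.support, ∀ d' ∈ P.support, c d = c d' → γ d = γ d' → d = d' := by
    intro d _ d' _ hcd hγd
    have h1 : (d 1 : ℝ) = (d' 1 : ℝ) := by
      rcases hcond with hα | hirr
      · have ha0 : a ≠ 0 := div_ne_zero hα h
        have hcd' : -a * (d 1 : ℝ) = -a * (d' 1 : ℝ) := hcd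
        exact mul_left_cancel₀ (neg_ne_zero.2 ha0) hcd'
      · by_contra hne
        have hd1 : ((d 1 : ℝ) - (d' 1 : ℝ)) ≠ 0 := sub_ne_zero.2 hne
        have hγd' : (d 0 : ℝ) + p * (d 1 : ℝ) = (d' 0 : ℝ) + p * (d' 1 : ℝ) := hγd
        have hpval : p = ((d' 0 : ℝ) - (d 0 : ℝ)) / ((d 1 : ℝ) - (d' 1 : ℝ)) := by
          rw [eq_div_iff hd1]
          linear_combination hγd'
        refine hirr ⟨((d' 0 : ℤ) - (d 0 : ℤ) : ℚ) / ((d 1 : ℤ) - (d' 1 : ℤ) : ℚ), ?_⟩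
        rw [hpval]
        push_cast
        ring
    have h0 : (d 0 : ℝ) = (d' 0 : ℝ) := by
      have hγd' : (d 0 : ℝ) + p * (d 1 : ℝ) = (d' 0 : ℝ) + p * (d' 1 : ℝ) := hγd
      rw [h1] at hγd'
      linarith
    have e1 : d 1 = d' 1 := by exact_mod_cast h1
    have e0 : d 0 = d' 0 := by exact_mod_cast h0
    ext i
    fin_cases i
    · exact e0
    · exact e1
  -- the evaluation identity in the required shape
  have hsum : ∀ x ∈ Set.Ioo (0:ℝ) δ,
      ∑ d ∈ P.support, A d * x ^ (γ d) * Real.exp (c d / x) = 0 := by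
    intro x hx
    have hx0 : (0:ℝ) < x := hx.1
    have := heval x hx
    rw [MvPolynomial.eval_eq'] at this
    rw [← this]
    refine Finset.sum_congr rfl fun d _ => ?_
    rw [Fin.prod_univ_two]
    simp only [Matrix.cons_val_zero, Matrix.cons_val_one, Matrix.head_cons]
    rw [mul_pow, ← Real.exp_nat_mul, ← Real.rpow_natCast (x ^ p) (d 1),
      ← Real.rpow_natCast x (d 0), ← Real.rpow_mul hx0.le,
      show γ d = (d 0 : ℝ) + p * (d 1 : ℝ) from rfl, Real.rpow_add hx0]
    have harg : (d 1 : ℝ) * (-α₁ / (β₆ * x)) = c d / x := by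
      simp only [hc, ha]
      field_simp
    rw [harg]
    ring
  -- apply linear independence
  obtain ⟨d, hd⟩ := (MvPolynomial.ne_zero_iff.mp hP)
  exact hd (lin_indep δ hδ P.support.card P.support rfl γ c A hinj hsum d
    (MvPolynomial.mem_support_iff.2 hd))
end

section
/- Let α₂, α₄, β₂, β₅ be real numbers with α₄β₅ ≠ 0, and suppose that α₂/α₄ ∉ ℚ or β₂/β₅ − α₂/α₄ ∉ ℚ. Let I be a nonempty open interval contained in {x ∈ ℝ : x > 0 and β₅x² + α₄ > 0}. Then the function Ω(x) = x^{α₂/α₄}·(β₅x² + α₄)^{(β₂/β₅ − α₂/α₄)/2} is transcendental over the rational functions on I: there is no nonzero polynomial P ∈ ℝ[X,Y] in two variables such that P(x, Ω(x)) = 0 for all x ∈ I. (Verification of condition (H1) in Section 5.1 of the paper.) -/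
/-!
With `a = α₂/α₄`, `c = (β₂/β₅ - α₂/α₄)/2` and `g = β₅X² + α₄`, the function `Ω = x^a g^c` solves
the linear ODE `x g Ω' = (a g + 2cβ₅x²) Ω`. Take a relation `∑_{j ∈ S} p_j(x) Ω^j = 0` with the
fewest terms. Differentiating it and eliminating the `j₀`-th term gives a relation with
coefficients `x g W(p_{j₀}, p_j) + (j - j₀)(a g + 2cβ₅x²) p_{j₀} p_j` on `S \ {j₀}`. Such a
coefficient can only vanish if the rational function `p_j / p_{j₀}` has logarithmic derivative
`-(j - j₀)(a/x + 2cβ₅x/g)`; comparing its orders at `0` and at `∞` with the residues there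
forces `(j - j₀)a ∈ ℤ` and `(j - j₀)(a + 2c) ∈ ℤ`, which the irrationality hypothesis rules out.
So the shorter relation is nontrivial, a contradiction; a one-term relation is impossible since
`Ω ≠ 0` and `p_{j₀}` has finitely many roots.
-/

open Real

open Polynomial Polynomial.Bivariate

namespace Polynomial

section CommSemiring

variable {R : Type*} [CommSemiring R] {f g : R[X]} {m n : ℕ}

theorem coeff_X_mul_derivative (p : R[X]) (n : ℕ) :
    (X * derivative p).coeff n = n * p.coeff n := by
  cases n with
  | zero => simp
  | succ n => rw [coeff_X_mul, coeff_derivative]; push_cast; ring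

theorem natDegree_X_mul_derivative_le (p : R[X]) : (X * derivative p).natDegree ≤ p.natDegree :=
  natDegree_le_iff_coeff_eq_zero.mpr fun n hn => by
    rw [coeff_X_mul_derivative, coeff_eq_zero_of_natDegree_lt hn, mul_zero]

theorem coeff_X_mul_derivative_of_lt {p : R[X]} {i : ℕ} (hi : i < p.natTrailingDegree) :
    (X * derivative p).coeff i = 0 := by
  rw [coeff_X_mul_derivative, coeff_eq_zero_of_lt_natTrailingDegree hi, mul_zero]

theorem coeff_mul_eq_zero_of_lt_add (hf : ∀ i < m, f.coeff i = 0) (hg : ∀ i < n, g.coeff i = 0)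
    {k : ℕ} (hk : k < m + n) : (f * g).coeff k = 0 := by
  rw [coeff_mul]
  refine Finset.sum_eq_zero fun ⟨i, j⟩ hij => ?_
  rw [Finset.HasAntidiagonal.mem_antidiagonal] at hij
  rcases lt_or_ge i m with hi | hi
  · rw [hf i hi, zero_mul]
  · rw [hg j (by omega), mul_zero]

theorem coeff_mul_add_eq_of_coeff_eq_zero (hf : ∀ i < m, f.coeff i = 0)
    (hg : ∀ i < n, g.coeff i = 0) : (f * g).coeff (m + n) = f.coeff m * g.coeff n := by
  rw [coeff_mul,
    Finset.sum_eq_single_of_mem (m, n) (Finset.HasAntidiagonal.mem_antidiagonal.mpr rfl)]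
  rintro ⟨i, j⟩ hij hne
  rw [Finset.HasAntidiagonal.mem_antidiagonal] at hij
  rcases lt_trichotomy i m with hi | rfl | hi
  · rw [hf i hi, zero_mul]
  · exact absurd (by congr 1; omega) hne
  · rw [hg j (by omega), mul_zero]

end CommSemiring

section CommRing

variable {R : Type*} [CommRing R] {D N g h : R[X]}

theorem X_mul_wronskian (D N : R[X]) :
    X * wronskian D N = D * (X * derivative N) - X * derivative D * N := by
  rw [wronskian]; ring

theorem coeff_X_mul_wronskian_of_lt {k : ℕ} (hk : k < D.natTrailingDegree + N.natTrailingDegree) :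
    (X * wronskian D N).coeff k = 0 := by
  rw [X_mul_wronskian, coeff_sub,
    coeff_mul_eq_zero_of_lt_add (fun _ => coeff_eq_zero_of_lt_natTrailingDegree)
      (fun _ => coeff_X_mul_derivative_of_lt) hk,
    coeff_mul_eq_zero_of_lt_add (fun _ => coeff_X_mul_derivative_of_lt)
      (fun _ => coeff_eq_zero_of_lt_natTrailingDegree) hk, sub_zero]

theorem coeff_X_mul_wronskian_natTrailingDegree_add :
    (X * wronskian D N).coeff (D.natTrailingDegree + N.natTrailingDegree) =
      ((N.natTrailingDegree : R) - D.natTrailingDegree) * (D.trailingCoeff * N.trailingCoeff) := by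
  rw [X_mul_wronskian, coeff_sub,
    coeff_mul_add_eq_of_coeff_eq_zero (fun _ => coeff_eq_zero_of_lt_natTrailingDegree)
      (fun _ => coeff_X_mul_derivative_of_lt),
    coeff_mul_add_eq_of_coeff_eq_zero (fun _ => coeff_X_mul_derivative_of_lt)
      (fun _ => coeff_eq_zero_of_lt_natTrailingDegree),
    coeff_X_mul_derivative, coeff_X_mul_derivative, trailingCoeff, trailingCoeff]
  ring

theorem natDegree_X_mul_wronskian_le :
    (X * wronskian D N).natDegree ≤ D.natDegree + N.natDegree := by
  rw [X_mul_wronskian]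
  exact (natDegree_sub_le_of_le (natDegree_mul_le_of_le le_rfl (natDegree_X_mul_derivative_le N))
    (natDegree_mul_le_of_le (natDegree_X_mul_derivative_le D) le_rfl)).trans (max_self _).le

theorem coeff_X_mul_wronskian_natDegree_add :
    (X * wronskian D N).coeff (D.natDegree + N.natDegree) =
      ((N.natDegree : R) - D.natDegree) * (D.leadingCoeff * N.leadingCoeff) := by
  rw [X_mul_wronskian, coeff_sub,
    coeff_mul_add_eq_of_natDegree_le le_rfl (natDegree_X_mul_derivative_le N),
    coeff_mul_add_eq_of_natDegree_le (natDegree_X_mul_derivative_le D) le_rfl,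
    coeff_X_mul_derivative, coeff_X_mul_derivative, leadingCoeff, leadingCoeff]
  ring

variable [IsDomain R]

/- If `g (X W(D, N)) + h D N = 0`, then `N / D` has logarithmic derivative `-h / (X g)`; the two
lemmas below compare its order at `0`, resp. at `∞`, with the residue of the right-hand side. -/
theorem natTrailingDegree_relation_of_wronskian (hD : D ≠ 0) (hN : N ≠ 0)
    (H : g * (X * wronskian D N) + h * (D * N) = 0) :
    ((N.natTrailingDegree : R) - D.natTrailingDegree) * g.coeff 0 + h.coeff 0 = 0 := by
  have hcoeff := congrArg (coeff · (0 + (D.natTrailingDegree + N.natTrailingDegree))) H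
  have hDN : ∀ i < D.natTrailingDegree + N.natTrailingDegree, (D * N).coeff i = 0 := fun i hi =>
    coeff_eq_zero_of_lt_natTrailingDegree (by rwa [natTrailingDegree_mul hD hN])
  simp only [coeff_add, coeff_zero] at hcoeff
  rw [coeff_mul_add_eq_of_coeff_eq_zero (by simp) fun i hi => coeff_X_mul_wronskian_of_lt hi,
    coeff_mul_add_eq_of_coeff_eq_zero (by simp) hDN, coeff_X_mul_wronskian_natTrailingDegree_add,
    coeff_mul_natTrailingDegree_add_natTrailingDegree] at hcoeff
  have htc : D.trailingCoeff * N.trailingCoeff ≠ 0 := by simp [hD, hN]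
  exact (mul_eq_zero.mp (by linear_combination hcoeff)).resolve_right htc

theorem natDegree_relation_of_wronskian (hD : D ≠ 0) (hN : N ≠ 0) {k : ℕ}
    (hg : g.natDegree ≤ k) (hh : h.natDegree ≤ k)
    (H : g * (X * wronskian D N) + h * (D * N) = 0) :
    ((N.natDegree : R) - D.natDegree) * g.coeff k + h.coeff k = 0 := by
  have hcoeff := congrArg (coeff · (k + (D.natDegree + N.natDegree))) H
  simp only [coeff_add, coeff_zero] at hcoeff
  rw [coeff_mul_add_eq_of_natDegree_le hg natDegree_X_mul_wronskian_le,
    coeff_mul_add_eq_of_natDegree_le hh natDegree_mul_le, coeff_X_mul_wronskian_natDegree_add,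
    coeff_mul_degree_add_degree] at hcoeff
  have hlc : D.leadingCoeff * N.leadingCoeff ≠ 0 := by simp [hD, hN]
  exact (mul_eq_zero.mp (by linear_combination hcoeff)).resolve_right hlc

end CommRing

end Polynomial

theorem wronskian_relation_ne_zero {a c α β : ℝ} (hα : α ≠ 0) (hβ : β ≠ 0)
    (hirr : Irrational a ∨ Irrational (2 * c)) {D N : ℝ[X]} (hD : D ≠ 0) (hN : N ≠ 0) {m : ℤ}
    (hm : m ≠ 0) :
    X * (C β * X ^ 2 + C α) * wronskian D N +
      C (m : ℝ) * ((C a * (C β * X ^ 2 + C α) + C (2 * c * β) * X ^ 2) * (D * N)) ≠ 0 := by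
  intro H
  have H' : (C β * X ^ 2 + C α) * (X * wronskian D N) +
      C (m : ℝ) * (C a * (C β * X ^ 2 + C α) + C (2 * c * β) * X ^ 2) * (D * N) = 0 := by
    linear_combination H
  have h0 := natTrailingDegree_relation_of_wronskian hD hN H'
  have h2 := natDegree_relation_of_wronskian hD hN (k := 2) (by compute_degree)
    (by compute_degree) H'
  simp only [coeff_add, coeff_C_mul, mul_add, coeff_C] at h0 h2
  norm_num at h0 h2
  have ha : (((N.natTrailingDegree - D.natTrailingDegree : ℤ)) : ℝ) + m * a = 0 := by
    have h : ((N.natTrailingDegree - D.natTrailingDegree : ℝ) + m * a) * α = 0 := by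
      linear_combination h0
    push_cast
    exact (mul_eq_zero.mp h).resolve_right hα
  have hc : (((N.natDegree - D.natDegree - (N.natTrailingDegree - D.natTrailingDegree) : ℤ)) : ℝ)
      + m * (2 * c) = 0 := by
    have h : ((N.natDegree - D.natDegree : ℝ) + m * (a + 2 * c)) * β = 0 := by
      linear_combination h2
    push_cast at ha ⊢
    linear_combination (mul_eq_zero.mp h).resolve_right hβ - ha
  rcases hirr with hirr | hirr
  · exact ((hirr.intCast_mul hm).intCast_add _).ne_zero ha
  · exact ((hirr.intCast_mul hm).intCast_add _).ne_zero hc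

section Transcendence

variable {U : Set ℝ} {f : ℝ → ℝ} {u v : ℝ[X]}

theorem sum_wronskian_eval_mul_pow_eq_zero (hU : IsOpen U)
    (hdiff : ∀ x ∈ U, DifferentiableAt ℝ f x)
    (hode : ∀ x ∈ U, u.eval x * deriv f x = v.eval x * f x) {S : Finset ℕ} {p : ℕ → ℝ[X]}
    (hsum : ∀ x ∈ U, ∑ j ∈ S, (p j).eval x * f x ^ j = 0) (j₀ : ℕ) :
    ∀ x ∈ U, ∑ j ∈ S,
      (u * wronskian (p j₀) (p j) + C ((j : ℝ) - j₀) * (v * (p j₀ * p j))).eval x * f x ^ j =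
        0 := by
  intro x hx
  have hderiv : HasDerivAt (fun y => ∑ j ∈ S, (p j).eval y * f y ^ j)
      (∑ j ∈ S, ((derivative (p j)).eval x * f x ^ j +
        (p j).eval x * (j * f x ^ (j - 1) * deriv f x))) x :=
    HasDerivAt.fun_sum fun j _ => ((p j).hasDerivAt x).mul ((hdiff x hx).hasDerivAt.pow j)
  have hconst : HasDerivAt (fun y => ∑ j ∈ S, (p j).eval y * f y ^ j) 0 x :=
    (hasDerivAt_const x 0).congr_of_eventuallyEq
      (Filter.eventually_of_mem (hU.mem_nhds hx) hsum)
  have hsum' : ∑ j ∈ S, (u.eval x * (derivative (p j)).eval x + j * v.eval x * (p j).eval x) *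
      f x ^ j = 0 := by
    rw [← mul_zero (u.eval x), ← hderiv.unique hconst, Finset.mul_sum]
    refine Finset.sum_congr rfl fun j _ => ?_
    cases j with
    | zero => simp
    | succ j =>
      simp only [Nat.add_sub_cancel, pow_succ]
      linear_combination (-((j + 1 : ℕ) : ℝ) * (p (j + 1)).eval x * f x ^ j) * hode x hx
  -- `p j₀ · (u · derivative of the relation) - (u p j₀' + j₀ v p j₀) · (relation)`
  calc _ = (p j₀).eval x * ∑ j ∈ S, (u.eval x * (derivative (p j)).eval x +
          j * v.eval x * (p j).eval x) * f x ^ j -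
        (u.eval x * (derivative (p j₀)).eval x + j₀ * v.eval x * (p j₀).eval x) *
          ∑ j ∈ S, (p j).eval x * f x ^ j := by
        rw [Finset.mul_sum, Finset.mul_sum, ← Finset.sum_sub_distrib]
        refine Finset.sum_congr rfl fun j _ => ?_
        simp only [wronskian, eval_add, eval_sub, eval_mul, eval_C]
        ring
    _ = 0 := by rw [hsum', hsum x hx, mul_zero, mul_zero, sub_zero]

theorem not_forall_sum_eval_mul_pow_eq_zero (hU : IsOpen U) (hUne : U.Nonempty)
    (hf : ∀ x ∈ U, f x ≠ 0) (hdiff : ∀ x ∈ U, DifferentiableAt ℝ f x)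
    (hode : ∀ x ∈ U, u.eval x * deriv f x = v.eval x * f x)
    (hW : ∀ D N : ℝ[X], D ≠ 0 → N ≠ 0 → ∀ m : ℤ, m ≠ 0 →
      u * wronskian D N + C (m : ℝ) * (v * (D * N)) ≠ 0)
    (S : Finset ℕ) (p : ℕ → ℝ[X]) (hS : S.Nonempty) (hp : ∀ j ∈ S, p j ≠ 0) :
    ¬ ∀ x ∈ U, ∑ j ∈ S, (p j).eval x * f x ^ j = 0 := by
  induction S using Finset.strongInduction generalizing p with
  | H S ih =>
  intro hsum
  obtain ⟨j₀, hj₀⟩ := hS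
  rcases (S.erase j₀).eq_empty_or_nonempty with hS' | hS'
  · have hSj₀ : S = {j₀} :=
      (Finset.erase_eq_empty_iff S j₀).mp hS' |>.resolve_left (Finset.ne_empty_of_mem hj₀)
    have hroots : U ⊆ {x | (p j₀).IsRoot x} := fun x hx => by
      have h := hsum x hx
      rw [hSj₀, Finset.sum_singleton] at h
      exact (mul_eq_zero.mp h).resolve_right (pow_ne_zero _ (hf x hx))
    obtain ⟨x, hx⟩ := hUne
    exact hp j₀ hj₀ (eq_zero_of_infinite_isRoot _
      ((infinite_of_mem_nhds x (hU.mem_nhds hx)).mono hroots))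
  · refine ih (S.erase j₀) (Finset.erase_ssubset hj₀)
      (fun j => u * wronskian (p j₀) (p j) + C ((j : ℝ) - j₀) * (v * (p j₀ * p j))) hS'
      (fun j hj => ?_) fun x hx => ?_
    · have hj := Finset.mem_erase.mp hj
      have hm : (j : ℤ) - j₀ ≠ 0 := sub_ne_zero.mpr (by exact_mod_cast hj.1)
      simpa using hW _ _ (hp j₀ hj₀) (hp j hj.2) _ hm
    · have h := sum_wronskian_eval_mul_pow_eq_zero hU hdiff hode hsum j₀ x hx
      rwa [← Finset.add_sum_erase S _ hj₀, wronskian_self_eq_zero, sub_self, C_0, mul_zero,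
        zero_mul, add_zero, eval_zero, zero_mul, zero_add] at h

theorem not_forall_evalEval_eq_zero (hU : IsOpen U) (hUne : U.Nonempty)
    (hf : ∀ x ∈ U, f x ≠ 0) (hdiff : ∀ x ∈ U, DifferentiableAt ℝ f x)
    (hode : ∀ x ∈ U, u.eval x * deriv f x = v.eval x * f x)
    (hW : ∀ D N : ℝ[X], D ≠ 0 → N ≠ 0 → ∀ m : ℤ, m ≠ 0 →
      u * wronskian D N + C (m : ℝ) * (v * (D * N)) ≠ 0)
    {Q : ℝ[X][Y]} (hQ : Q ≠ 0) : ¬ ∀ x ∈ U, Q.evalEval x (f x) = 0 := by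
  have hsum : ∀ x y : ℝ, Q.evalEval x y = ∑ j ∈ Q.support, (Q.coeff j).eval x * y ^ j := by
    intro x y
    rw [evalEval, eval_eq_sum (p := Q), Polynomial.sum, eval_finsetSum]
    simp
  simp only [hsum]
  exact not_forall_sum_eval_mul_pow_eq_zero hU hUne hf hdiff hode hW Q.support Q.coeff
    (support_nonempty.mpr hQ) fun j hj => mem_support_iff.mp hj

end Transcendence

theorem exists_evalEval_eq_mvPolynomial_eval {R : Type*} [CommRing R] [IsDomain R] [Infinite R]
    {P : MvPolynomial (Fin 2) R} (hP : P ≠ 0) :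
    ∃ Q : R[X][Y], Q ≠ 0 ∧ ∀ x y, Q.evalEval x y = MvPolynomial.eval ![x, y] P := by
  have hQP (x y : R) :
      (MvPolynomial.aeval (![C X, Y] : Fin 2 → R[X][Y]) P).evalEval x y =
        MvPolynomial.eval ![x, y] P := by
    have h : (aevalAeval x y).comp (MvPolynomial.aeval (![C X, Y] : Fin 2 → R[X][Y])) =
        MvPolynomial.aeval ![x, y] :=
      MvPolynomial.algHom_ext fun i => by fin_cases i <;> simp
    rw [← coe_aevalAeval_eq_evalEval, ← AlgHom.comp_apply, h, MvPolynomial.aeval_eq_eval]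
  refine ⟨_, fun hQ => hP (MvPolynomial.funext fun w => ?_), hQP⟩
  have hw : w = ![w 0, w 1] := funext fun i => by fin_cases i <;> rfl
  rw [hw, ← hQP, hQ, evalEval_zero, map_zero]

theorem hasDerivAt_rpow_mul_rpow {a c α β x : ℝ} (hx : 0 < x) (hg : 0 < β * x ^ 2 + α) :
    HasDerivAt (fun y => y ^ a * (β * y ^ 2 + α) ^ c)
      ((a * (β * x ^ 2 + α) + 2 * c * β * x ^ 2) * (x ^ a * (β * x ^ 2 + α) ^ c) /
        (x * (β * x ^ 2 + α))) x := by
  have hpoly : HasDerivAt (fun y => β * y ^ 2 + α) (β * (2 * x)) x := by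
    simpa using ((hasDerivAt_pow 2 x).const_mul β).add_const α
  refine ((hasDerivAt_rpow_const (p := a) (Or.inl hx.ne')).mul
    (hpoly.rpow_const (p := c) (Or.inl hg.ne'))).congr_deriv ?_
  rw [rpow_sub_one hx.ne', rpow_sub_one hg.ne']
  generalize β * x ^ 2 + α = G at hg ⊢
  field_simp

/-- Condition (H1) in Section 5.1: `Ω(x) = x^(α₂/α₄) (β₅ x² + α₄)^((β₂/β₅ - α₂/α₄)/2)` is
transcendental over the rational functions on any nonempty open interval contained in
`{x | x > 0 ∧ β₅ x² + α₄ > 0}`, provided `α₄ β₅ ≠ 0` and `α₂/α₄ ∉ ℚ` or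
`β₂/β₅ - α₂/α₄ ∉ ℚ`. -/
theorem H1_sec51 (α₂ α₄ β₂ β₅ : ℝ) (h : α₄ * β₅ ≠ 0)
    (hirr : Irrational (α₂ / α₄) ∨ Irrational (β₂ / β₅ - α₂ / α₄))
    (s t : ℝ) (hst : s < t)
    (hI : Set.Ioo s t ⊆ {x : ℝ | 0 < x ∧ 0 < β₅ * x ^ 2 + α₄}) :
    ¬ ∃ P : MvPolynomial (Fin 2) ℝ, P ≠ 0 ∧
      ∀ x ∈ Set.Ioo s t,
        MvPolynomial.eval
          ![x, x ^ (α₂ / α₄) *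
              (β₅ * x ^ 2 + α₄) ^ ((β₂ / β₅ - α₂ / α₄) / 2)] P = 0 := by
  rintro ⟨P, hP, hPI⟩
  obtain ⟨Q, hQ, hQP⟩ := exists_evalEval_eq_mvPolynomial_eval hP
  set a := α₂ / α₄
  set c := (β₂ / β₅ - α₂ / α₄) / 2
  have hirr' : Irrational a ∨ Irrational (2 * c) := by
    rwa [show 2 * c = β₂ / β₅ - α₂ / α₄ by ring]
  have hderiv (x : ℝ) (hx : x ∈ Set.Ioo s t) :=
    hasDerivAt_rpow_mul_rpow (a := a) (c := c) (hI hx).1 (hI hx).2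
  refine not_forall_evalEval_eq_zero (u := X * (C β₅ * X ^ 2 + C α₄))
    (v := C a * (C β₅ * X ^ 2 + C α₄) + C (2 * c * β₅) * X ^ 2)
    isOpen_Ioo (Set.nonempty_Ioo.mpr hst)
    (fun x hx => (mul_pos (rpow_pos_of_pos (hI hx).1 _) (rpow_pos_of_pos (hI hx).2 _)).ne')
    (fun x hx => (hderiv x hx).differentiableAt) (fun x hx => ?_)
    (fun D N hD hN m hm => wronskian_relation_ne_zero (left_ne_zero_of_mul h)
      (right_ne_zero_of_mul h) hirr' hD hN hm)
    hQ fun x hx => (hQP _ _).trans (hPI x hx)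
  simp only [(hderiv x hx).deriv, eval_add, eval_mul, eval_C, eval_X, eval_pow]
  rw [mul_div_cancel₀ _ (mul_ne_zero (hI hx).1.ne' (hI hx).2.ne')]
end
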